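/- arXiv:1903.07379 — 7 statements merged into one kernel-verified Lean document; each statement's English description precedes it below -/
import Mathlib

section
/- Let N ≥ 2 and let (X_i, Y_i), i = 1,…,N, be independent pairs of Σ-valued random variables, each pair distributed according to the joint probability mass function p. Then the expected Correlation-PP payment satisfies E[MIG^Corr(X, Y)] = Σ_{y∈Σ} p(y,y) − Σ_{y∈Σ} p_A(y)·p_B(y); in particular MIG^Corr is an unbiased estimator, independent of N, of the same-task agreement probability minus the distinct-task agreement probability. -/
open Finset

/-- The Correlation-PP payment for `N` tasks and reports `rA`, `rB`. -/
noncomputable def MIGcorr {S : Type} [DecidableEq S] (N : ℕ) (rA rB : Fin N → S) : ℝ :=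
  (N : ℝ)⁻¹ * ∑ i, (if rA i = rB i then (1 : ℝ) else 0)
    - ((N : ℝ) * ((N : ℝ) - 1))⁻¹ *
      ∑ i, ∑ j, (if i ≠ j then (if rA i = rB j then (1 : ℝ) else 0) else 0)

lemma sum_pi_prod {T : Type} [Fintype T] [DecidableEq T] (N : ℕ) (g : Fin N → T → ℝ) :
    ∑ ω : Fin N → T, ∏ k, g k (ω k) = ∏ k, ∑ z, g k z := by
  rw [Finset.prod_univ_sum, Fintype.piFinset_univ]

lemma prod_two {N : ℕ} (i j : Fin N) (hij : i ≠ j) (a b : Fin N → ℝ) :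
    ∏ k, (if i = k then a k else if j = k then b k else 1) = a i * b j := by
  rw [← Finset.mul_prod_erase univ _ (mem_univ i), if_pos rfl]
  congr 1
  rw [Finset.prod_congr rfl (fun k hk => if_neg (fun h => (Finset.mem_erase.mp hk).1 h.symm)),
    Finset.prod_ite_eq, if_pos (Finset.mem_erase.mpr ⟨(Ne.symm hij), mem_univ j⟩)]

lemma exp_single {S : Type} [Fintype S] [DecidableEq S] (p : S × S → ℝ)
    (hp1 : ∑ z : S × S, p z = 1) (N : ℕ) (i : Fin N) (f : S × S → ℝ) :
    ∑ ω : Fin N → S × S, (∏ k, p (ω k)) * f (ω i) = ∑ z : S × S, p z * f z := by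
  have h1 : ∀ ω : Fin N → S × S, (∏ k, p (ω k)) * f (ω i) =
      ∏ k, (p (ω k) * (if i = k then f (ω k) else 1)) := by
    intro ω
    rw [Finset.prod_mul_distrib, Finset.prod_ite_eq, if_pos (mem_univ i)]
  simp_rw [h1]
  rw [sum_pi_prod N (fun k z => p z * (if i = k then f z else 1))]
  have h2 : ∀ k : Fin N, (∑ z : S × S, p z * (if i = k then f z else 1)) =
      (if i = k then ∑ z : S × S, p z * f z else 1) := by
    intro k
    by_cases h : i = k <;> simp [h, hp1]
  simp_rw [h2]
  rw [Finset.prod_ite_eq, if_pos (mem_univ i)]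

lemma exp_pair {S : Type} [Fintype S] [DecidableEq S] (p : S × S → ℝ)
    (hp1 : ∑ z : S × S, p z = 1) (N : ℕ) (i j : Fin N) (hij : i ≠ j) (f g : S × S → ℝ) :
    ∑ ω : Fin N → S × S, (∏ k, p (ω k)) * (f (ω i) * g (ω j))
      = (∑ z : S × S, p z * f z) * (∑ z : S × S, p z * g z) := by
  have h1 : ∀ ω : Fin N → S × S, (∏ k, p (ω k)) * (f (ω i) * g (ω j)) =
      ∏ k, (p (ω k) * (if i = k then f (ω k) else if j = k then g (ω k) else 1)) := by
    intro ω
    rw [Finset.prod_mul_distrib, prod_two i j hij]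
  simp_rw [h1]
  rw [sum_pi_prod N (fun k z => p z * (if i = k then f z else if j = k then g z else 1))]
  have h2 : ∀ k : Fin N, (∑ z : S × S, p z * (if i = k then f z else if j = k then g z else 1)) =
      (if i = k then ∑ z : S × S, p z * f z else if j = k then ∑ z : S × S, p z * g z else 1) := by
    intro k
    by_cases h : i = k
    · simp [h]
    · by_cases h' : j = k <;> simp [h, h', hp1]
  simp_rw [h2]
  exact prod_two i j hij _ _

lemma count_pairs {N : ℕ} (C : ℝ) :
    ∑ _i : Fin N, ∑ _j : Fin N, (if _i ≠ _j then C else 0) = (N : ℝ) * ((N : ℝ) - 1) * C := by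
  have h : ∀ i : Fin N, ∑ j : Fin N, (if i ≠ j then C else 0) = (N : ℝ) * C - C := by
    intro i
    have : ∀ j : Fin N, (if i ≠ j then C else 0) = C - (if i = j then C else 0) := by
      intro j; by_cases h : i = j <;> simp [h]
    simp_rw [this]
    rw [Finset.sum_sub_distrib, Finset.sum_const, Finset.sum_ite_eq, if_pos (mem_univ i)]
    simp [mul_comm]
  simp_rw [h]
  rw [Finset.sum_const]
  simp [mul_comm, mul_sub]
  ring

/-- For `N ≥ 2` i.i.d. pairs `(X_i, Y_i)` with joint pmf `p`, the expected Correlation-PP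
payment equals `∑_y p(y,y) − ∑_y p_A(y)·p_B(y)`, independently of `N`. -/
theorem stmt_0 (S : Type) [Fintype S] [Nonempty S] [DecidableEq S]
    (p : S × S → ℝ) (hp0 : ∀ z, 0 ≤ p z) (hp1 : ∑ z : S × S, p z = 1)
    (N : ℕ) (hN : 2 ≤ N) :
    ∑ ω : Fin N → S × S, (∏ i, p (ω i)) *
        MIGcorr N (fun i => (ω i).1) (fun i => (ω i).2)
      = (∑ y : S, p (y, y)) - ∑ y : S, (∑ x : S, p (y, x)) * (∑ x : S, p (x, y)) := by
  have hN0 : (N : ℝ) ≠ 0 := by positivity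
  have hN1 : (N : ℝ) - 1 ≠ 0 := by
    have : (2 : ℝ) ≤ (N : ℝ) := by exact_mod_cast hN
    linarith
  -- expectation of the same-task indicator
  have Esame : ∀ i : Fin N,
      ∑ ω : Fin N → S × S, (∏ k, p (ω k)) * (if (ω i).1 = (ω i).2 then (1 : ℝ) else 0)
        = ∑ y : S, p (y, y) := by
    intro i
    rw [exp_single p hp1 N i (fun z => if z.1 = z.2 then 1 else 0)]
    rw [Fintype.sum_prod_type]
    simp [mul_ite, Finset.sum_ite_eq]
  -- expectation of the cross-task indicator
  have Ecross : ∀ i j : Fin N, i ≠ j →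
      ∑ ω : Fin N → S × S, (∏ k, p (ω k)) * (if (ω i).1 = (ω j).2 then (1 : ℝ) else 0)
        = ∑ y : S, (∑ x : S, p (y, x)) * (∑ x : S, p (x, y)) := by
    intro i j hij
    have expand : ∀ a b : S, (if a = b then (1 : ℝ) else 0)
        = ∑ y : S, (if a = y then (1 : ℝ) else 0) * (if b = y then (1 : ℝ) else 0) := by
      intro a b
      simp only [boole_mul]
      rw [Finset.sum_ite_eq univ a (fun y => if b = y then (1 : ℝ) else 0), if_pos (mem_univ a)]
      by_cases h : a = b <;> simp [h, Ne.symm]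
    have step : ∀ ω : Fin N → S × S,
        (∏ k, p (ω k)) * (if (ω i).1 = (ω j).2 then (1 : ℝ) else 0)
        = ∑ y : S, (∏ k, p (ω k)) *
            ((if (ω i).1 = y then (1 : ℝ) else 0) * (if (ω j).2 = y then (1 : ℝ) else 0)) := by
      intro ω
      rw [expand, Finset.mul_sum]
    rw [Finset.sum_congr rfl fun ω _ => step ω, Finset.sum_comm]
    have per_y : ∀ y : S,
        ∑ ω : Fin N → S × S, (∏ k, p (ω k)) *
            ((if (ω i).1 = y then (1 : ℝ) else 0) * (if (ω j).2 = y then (1 : ℝ) else 0))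
          = (∑ x : S, p (y, x)) * (∑ x : S, p (x, y)) := by
      intro y
      rw [exp_pair p hp1 N i j hij (fun z => if z.1 = y then 1 else 0)
        (fun z => if z.2 = y then 1 else 0)]
      congr 1
      · rw [Fintype.sum_prod_type]
        simp [mul_ite, Finset.sum_ite_eq']
      · rw [Fintype.sum_prod_type]
        simp [mul_ite, Finset.sum_ite_eq']
    exact Finset.sum_congr rfl fun y _ => per_y y
  have expand : ∀ ω : Fin N → S × S,
      (∏ i, p (ω i)) * MIGcorr N (fun i => (ω i).1) (fun i => (ω i).2)
      = (N : ℝ)⁻¹ * ((∏ i, p (ω i)) * ∑ i, (if (ω i).1 = (ω i).2 then (1 : ℝ) else 0))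
        - ((N : ℝ) * ((N : ℝ) - 1))⁻¹ *
          ((∏ i, p (ω i)) *
            ∑ i, ∑ j, (if i ≠ j then (if (ω i).1 = (ω j).2 then (1 : ℝ) else 0) else 0)) := by
    intro ω
    simp only [MIGcorr]
    ring
  rw [Finset.sum_congr rfl fun ω _ => expand ω, Finset.sum_sub_distrib,
    ← Finset.mul_sum, ← Finset.mul_sum]
  have key1 : ∑ ω : Fin N → S × S,
      (∏ i, p (ω i)) * ∑ i, (if (ω i).1 = (ω i).2 then (1 : ℝ) else 0)
      = (N : ℝ) * ∑ y : S, p (y, y) := by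
    have h : ∀ ω : Fin N → S × S,
        (∏ k, p (ω k)) * ∑ i, (if (ω i).1 = (ω i).2 then (1 : ℝ) else 0)
        = ∑ i, (∏ k, p (ω k)) * (if (ω i).1 = (ω i).2 then (1 : ℝ) else 0) :=
      fun ω => Finset.mul_sum _ _ _
    rw [Finset.sum_congr rfl fun ω _ => h ω, Finset.sum_comm,
      Finset.sum_congr rfl fun i _ => Esame i, Finset.sum_const, card_univ, Fintype.card_fin,
      nsmul_eq_mul]
  have key2 : ∑ ω : Fin N → S × S,
      (∏ i, p (ω i)) *
        ∑ i, ∑ j, (if i ≠ j then (if (ω i).1 = (ω j).2 then (1 : ℝ) else 0) else 0)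
      = (N : ℝ) * ((N : ℝ) - 1) * ∑ y : S, (∑ x : S, p (y, x)) * (∑ x : S, p (x, y)) := by
    have h : ∀ ω : Fin N → S × S,
        (∏ k, p (ω k)) *
          ∑ i, ∑ j, (if i ≠ j then (if (ω i).1 = (ω j).2 then (1 : ℝ) else 0) else 0)
        = ∑ i, ∑ j, (∏ k, p (ω k)) *
            (if i ≠ j then (if (ω i).1 = (ω j).2 then (1 : ℝ) else 0) else 0) := by
      intro ω
      rw [Finset.mul_sum]
      exact Finset.sum_congr rfl fun i _ => Finset.mul_sum _ _ _
    rw [Finset.sum_congr rfl fun ω _ => h ω, Finset.sum_comm]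
    have inner : ∀ i : Fin N,
        ∑ ω : Fin N → S × S, ∑ j : Fin N,
          (∏ k, p (ω k)) * (if i ≠ j then (if (ω i).1 = (ω j).2 then (1 : ℝ) else 0) else 0)
        = ∑ j : Fin N, (if i ≠ j
            then ∑ y : S, (∑ x : S, p (y, x)) * (∑ x : S, p (x, y)) else 0) := by
      intro i
      rw [Finset.sum_comm]
      refine Finset.sum_congr rfl fun j _ => ?_
      by_cases hij : i ≠ j
      · simp only [if_pos hij]
        exact Ecross i j hij
      · push_neg at hij
        subst hij
        simp
    rw [Finset.sum_congr rfl fun i _ => inner i, count_pairs]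
  rw [key1, key2, inv_mul_cancel_left₀ hN0, inv_mul_cancel_left₀ (mul_ne_zero hN0 hN1)]
end

section
/- Suppose the correlation matrix satisfies the categorical sign condition: Δ(x,x) ≥ 0 for every x ∈ Σ and Δ(x,y) ≤ 0 for all x ≠ y. Then for every pair of row-stochastic strategy matrices θ_A, θ_B, ExpPay(θ_A, θ_B) ≤ Σ_{x∈Σ} Δ(x,x); i.e., truth-telling (both agents using the identity strategy) maximizes the expected Correlation-PP payment. -/
open Finset

/-- The correlation matrix `Δ(x,y) = p(x,y) − p_A(x)·p_B(y)`. -/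
noncomputable def Delta {S : Type} [Fintype S] (p : S → S → ℝ) (x y : S) : ℝ :=
  p x y - (∑ y' : S, p x y') * (∑ x' : S, p x' y)

/-- Expected Correlation-PP payment under strategies `θA`, `θB`. -/
noncomputable def ExpPay {S : Type} [Fintype S] (p : S → S → ℝ) (θA θB : S → S → ℝ) : ℝ :=
  ∑ a : S, ∑ x : S, ∑ y : S, θA x a * θB y a * Delta p x y

/-- Under the categorical sign condition (`Δ(x,x) ≥ 0`, `Δ(x,y) ≤ 0` for `x ≠ y`),
every pair of row-stochastic strategies gets expected payment at most `∑_x Δ(x,x)`,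
the truth-telling payment. -/
theorem stmt_2 (S : Type) [Fintype S] [Nonempty S] [DecidableEq S]
    (p : S → S → ℝ) (hp0 : ∀ x y, 0 ≤ p x y) (hp1 : ∑ x : S, ∑ y : S, p x y = 1)
    (hdiag : ∀ x : S, 0 ≤ Delta p x x)
    (hoff : ∀ x y : S, x ≠ y → Delta p x y ≤ 0)
    (θA θB : S → S → ℝ)
    (hA0 : ∀ x a, 0 ≤ θA x a) (hA1 : ∀ x, ∑ a : S, θA x a = 1)
    (hB0 : ∀ x a, 0 ≤ θB x a) (hB1 : ∀ x, ∑ a : S, θB x a = 1) :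
    ExpPay p θA θB ≤ ∑ x : S, Delta p x x := by
  have hB1' : ∀ y a, θB y a ≤ 1 := by
    intro y a
    calc θB y a ≤ ∑ a' : S, θB y a' :=
          Finset.single_le_sum (fun a' _ => hB0 y a') (Finset.mem_univ a)
      _ = 1 := hB1 y
  have key : ExpPay p θA θB
      = ∑ x : S, ∑ y : S, (∑ a : S, θA x a * θB y a) * Delta p x y := by
    unfold ExpPay
    rw [Finset.sum_comm]
    congr 1; ext x
    rw [Finset.sum_comm]
    congr 1; ext y
    rw [Finset.sum_mul]
  rw [key]
  apply Finset.sum_le_sum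
  intro x _
  have : ∑ y : S, (∑ a : S, θA x a * θB y a) * Delta p x y
      ≤ ∑ y : S, (if y = x then Delta p x x else 0) := by
    apply Finset.sum_le_sum
    intro y _
    by_cases h : y = x
    · subst h
      simp only [if_pos rfl]
      have hc1 : (∑ a : S, θA y a * θB y a) ≤ 1 := by
        calc (∑ a : S, θA y a * θB y a) ≤ ∑ a : S, θA y a * 1 := by
              apply Finset.sum_le_sum
              intro a _
              exact mul_le_mul_of_nonneg_left (hB1' y a) (hA0 y a)
          _ = 1 := by simp [hA1 y]
      simp only [if_true]
      exact mul_le_of_le_one_left (hdiag y) hc1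
    · simp only [if_neg h]
      apply mul_nonpos_of_nonneg_of_nonpos
      · exact Finset.sum_nonneg fun a _ => mul_nonneg (hA0 x a) (hB0 y a)
      · exact hoff x y (fun hxy => h hxy.symm)
  calc _ ≤ _ := this
    _ = Delta p x x := by simp
end

section
/- Suppose the correlation matrix satisfies the strict categorical sign condition: Δ(x,x) > 0 for every x ∈ Σ and Δ(x,y) < 0 for all x ≠ y. Let f, g : Σ → Σ be deterministic strategies, and suppose it is NOT the case that f = g and f is a bijection (i.e., the profile is not a shared permutation). Then Σ_{(x,y) : f(x) = g(y)} Δ(x,y) < Σ_{x∈Σ} Δ(x,x); i.e., any deterministic non-permutation strategy profile gives strictly smaller expected Correlation-PP payment than truth-telling. -/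
open Finset

/-- Under the strict categorical sign condition, every deterministic strategy profile
`(f, g)` that is not a shared permutation earns strictly less than truth-telling. -/
theorem stmt_4 (S : Type) [Fintype S] [Nonempty S] [DecidableEq S]
    (p : S → S → ℝ) (hp0 : ∀ x y, 0 ≤ p x y) (hp1 : ∑ x : S, ∑ y : S, p x y = 1)
    (hdiag : ∀ x : S, 0 < Delta p x x)
    (hoff : ∀ x y : S, x ≠ y → Delta p x y < 0)
    (f g : S → S) (hfg : ¬ (f = g ∧ Function.Bijective f)) :
    (∑ x : S, ∑ y : S, (if f x = g y then Delta p x y else 0)) < ∑ x : S, Delta p x x := by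
  classical
  have hT2 : (∑ x : S, ∑ y : S, (if f x = g y then Delta p x y else 0))
      = (∑ x : S, if f x = g x then Delta p x x else 0)
        + ∑ x : S, ∑ y ∈ univ.erase x, (if f x = g y then Delta p x y else 0) := by
    rw [← Finset.sum_add_distrib]
    refine Finset.sum_congr rfl fun x _ => ?_
    rw [← Finset.add_sum_erase _ _ (mem_univ x)]
  have hDle : ∀ x : S, (if f x = g x then Delta p x x else 0) ≤ Delta p x x := by
    intro x; split
    · exact le_rfl
    · exact (hdiag x).le
  have hOterm : ∀ x : S, ∀ y ∈ univ.erase x,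
      (if f x = g y then Delta p x y else 0) ≤ 0 := by
    intro x y hy
    have hxy : x ≠ y := (Finset.ne_of_mem_erase hy).symm
    split
    · exact (hoff x y hxy).le
    · exact le_rfl
  have hOle : ∀ x : S, (∑ y ∈ univ.erase x, (if f x = g y then Delta p x y else 0)) ≤ 0 := by
    intro x
    exact Finset.sum_nonpos (hOterm x)
  rw [hT2]
  by_cases hfe : f = g
  · -- f = g, so f is not injective
    have hninj : ¬ Function.Injective f := by
      intro hinj
      exact hfg ⟨hfe, Finite.injective_iff_bijective.mp hinj⟩
    simp only [Function.Injective, not_forall] at hninj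
    obtain ⟨a, b, hab, hne⟩ := hninj
    have hO : (∑ x : S, ∑ y ∈ univ.erase x, (if f x = g y then Delta p x y else 0)) < 0 := by
      have : (∑ x : S, ∑ y ∈ univ.erase x, (if f x = g y then Delta p x y else 0))
          < ∑ _x : S, (0 : ℝ) := by
        refine Finset.sum_lt_sum (fun x _ => hOle x) ⟨a, mem_univ a, ?_⟩
        have : (∑ y ∈ univ.erase a, (if f a = g y then Delta p a y else 0))
            < ∑ _y ∈ univ.erase a, (0 : ℝ) := by
          refine Finset.sum_lt_sum (hOterm a) ⟨b, Finset.mem_erase.mpr ⟨fun h => hne h.symm, mem_univ b⟩, ?_⟩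
          have hfagb : f a = g b := by rw [← hfe]; exact hab
          rw [if_pos hfagb]
          exact hoff a b hne
        simpa using this
      simpa using this
    have hD : (∑ x : S, if f x = g x then Delta p x x else 0) ≤ ∑ x : S, Delta p x x :=
      Finset.sum_le_sum fun x _ => hDle x
    linarith
  · -- ∃ x0, f x0 ≠ g x0
    have : ∃ x0, f x0 ≠ g x0 := by
      by_contra h
      push_neg at h
      exact hfe (funext h)
    obtain ⟨x0, hx0⟩ := this
    have hD : (∑ x : S, if f x = g x then Delta p x x else 0) < ∑ x : S, Delta p x x := by
      refine Finset.sum_lt_sum (fun x _ => hDle x) ⟨x0, mem_univ x0, ?_⟩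
      rw [if_neg hx0]
      exact hdiag x0
    have hO : (∑ x : S, ∑ y ∈ univ.erase x, (if f x = g y then Delta p x y else 0)) ≤ 0 :=
      Finset.sum_nonpos fun x _ => hOle x
    linarith
end

section
/- Suppose the correlation matrix satisfies the strict categorical sign condition: Δ(x,x) > 0 for every x ∈ Σ and Δ(x,y) < 0 for all x ≠ y. Then for row-stochastic strategy matrices θ_A, θ_B, equality ExpPay(θ_A, θ_B) = Σ_{x∈Σ} Δ(x,x) holds if and only if there exists a bijection σ : Σ → Σ such that θ_A and θ_B are both equal to the permutation matrix of σ (θ_A(x,a) = θ_B(x,a) = 𝟙[a = σ(x)]); hence every non-permutation (possibly mixed) strategy profile obtains strictly smaller expected Correlation-PP payment than truth-telling. -/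
open Finset

/-- Under the strict categorical sign condition, the expected payment attains the
truth-telling value `∑_x Δ(x,x)` iff both strategies equal the permutation matrix of a
common bijection `σ`. -/
theorem stmt_5 (S : Type) [Fintype S] [Nonempty S] [DecidableEq S]
    (p : S → S → ℝ) (hp0 : ∀ x y, 0 ≤ p x y) (hp1 : ∑ x : S, ∑ y : S, p x y = 1)
    (hdiag : ∀ x : S, 0 < Delta p x x)
    (hoff : ∀ x y : S, x ≠ y → Delta p x y < 0)
    (θA θB : S → S → ℝ)
    (hA0 : ∀ x a, 0 ≤ θA x a) (hA1 : ∀ x, ∑ a : S, θA x a = 1)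
    (hB0 : ∀ x a, 0 ≤ θB x a) (hB1 : ∀ x, ∑ a : S, θB x a = 1) :
    ExpPay p θA θB = ∑ x : S, Delta p x x ↔
      ∃ σ : Equiv.Perm S,
        (∀ x a, θA x a = if a = σ x then (1 : ℝ) else 0) ∧
        (∀ x a, θB x a = if a = σ x then (1 : ℝ) else 0) := by
  classical
  set c : S → S → ℝ := fun x y => ∑ a : S, θA x a * θB y a with hc_def
  have hBle1 : ∀ y a, θB y a ≤ 1 := by
    intro y a
    calc θB y a ≤ ∑ a' : S, θB y a' :=
          Finset.single_le_sum (fun i _ => hB0 y i) (mem_univ a)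
      _ = 1 := hB1 y
  have hc0 : ∀ x y, 0 ≤ c x y := fun x y =>
    Finset.sum_nonneg fun a _ => mul_nonneg (hA0 x a) (hB0 y a)
  have hc1 : ∀ x y, c x y ≤ 1 := by
    intro x y
    calc c x y ≤ ∑ a : S, θA x a * 1 :=
          Finset.sum_le_sum fun a _ =>
            mul_le_mul_of_nonneg_left (hBle1 y a) (hA0 x a)
      _ = 1 := by simpa using hA1 x
  have hEP : ExpPay p θA θB = ∑ x : S, ∑ y : S, c x y * Delta p x y := by
    unfold ExpPay
    rw [Finset.sum_comm]
    refine Finset.sum_congr rfl fun x _ => ?_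
    rw [Finset.sum_comm]
    refine Finset.sum_congr rfl fun y _ => ?_
    rw [hc_def, Finset.sum_mul]
  have hEP2 : ExpPay p θA θB = ∑ z : S × S, c z.1 z.2 * Delta p z.1 z.2 := by
    rw [hEP, ← Finset.univ_product_univ, Finset.sum_product]
  have hRHS : (∑ x : S, Delta p x x)
      = ∑ z : S × S, (if z.1 = z.2 then Delta p z.1 z.1 else 0) := by
    rw [← Finset.univ_product_univ, Finset.sum_product]
    refine Finset.sum_congr rfl fun x _ => ?_
    simp
  have hle : ∀ z : S × S,
      c z.1 z.2 * Delta p z.1 z.2 ≤ (if z.1 = z.2 then Delta p z.1 z.1 else 0) := by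
    rintro ⟨x, y⟩
    by_cases h : x = y
    · subst h
      simp only [if_pos rfl]
      exact mul_le_of_le_one_left (le_of_lt (hdiag x)) (hc1 x x)
    · simp only [if_neg h]
      have := mul_le_mul_of_nonneg_left (le_of_lt (hoff x y h)) (hc0 x y)
      simpa using this
  constructor
  · intro heq
    have hsum : ∑ z : S × S, c z.1 z.2 * Delta p z.1 z.2
        = ∑ z : S × S, (if z.1 = z.2 then Delta p z.1 z.1 else 0) := by
      rw [← hEP2, heq, hRHS]
    have hpt : ∀ z : S × S, c z.1 z.2 * Delta p z.1 z.2
        = (if z.1 = z.2 then Delta p z.1 z.1 else 0) := by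
      intro z
      exact (Finset.sum_eq_sum_iff_of_le (fun i _ => hle i)).mp hsum z (mem_univ z)
    have hcdiag : ∀ x, c x x = 1 := by
      intro x
      have h := hpt (x, x)
      simp only [if_pos rfl] at h
      have h' : c x x * Delta p x x = 1 * Delta p x x := by rw [one_mul]; exact h
      exact mul_right_cancel₀ (hdiag x).ne' h'
    have hcoff : ∀ x y, x ≠ y → c x y = 0 := by
      intro x y hxy
      have h := hpt (x, y)
      simp only [if_neg hxy] at h
      rcases mul_eq_zero.mp h with h | h
      · exact h
      · exact absurd h (hoff x y hxy).ne
    have key : ∀ x a, θA x a * (1 - θB x a) = 0 := by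
      intro x a
      have hsum0 : ∑ a' : S, θA x a' * (1 - θB x a') = 0 := by
        have : ∑ a' : S, θA x a' * (1 - θB x a')
            = (∑ a' : S, θA x a') - ∑ a' : S, θA x a' * θB x a' := by
          rw [← Finset.sum_sub_distrib]
          refine Finset.sum_congr rfl fun a' _ => by ring
        rw [this, hA1 x, show (∑ a' : S, θA x a' * θB x a') = 1 from hcdiag x]
        ring
      exact (Finset.sum_eq_zero_iff_of_nonneg
        (fun i _ => mul_nonneg (hA0 x i) (by linarith [hBle1 x i]))).mp hsum0 a (mem_univ a)
    -- For θA x a ≠ 0, θB x a = 1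
    have hB1of : ∀ x a, θA x a ≠ 0 → θB x a = 1 := by
      intro x a ha
      have := key x a
      rcases mul_eq_zero.mp this with h | h
      · exact absurd h ha
      · linarith
    -- existence of a support point
    have hex : ∀ x, ∃ a, θA x a ≠ 0 := by
      intro x
      by_contra h
      push_neg at h
      have : (∑ a : S, θA x a) = 0 := Finset.sum_eq_zero fun a _ => h a
      rw [hA1 x] at this
      norm_num at this
    -- uniqueness
    have huniq : ∀ x a b, a ≠ b → θA x a ≠ 0 → θA x b ≠ 0 → False := by
      intro x a b hab ha hb
      have h1 := hB1of x a ha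
      have h2 := hB1of x b hb
      have hsub : ({a, b} : Finset S) ⊆ univ := subset_univ _
      have hle2 : (∑ a' ∈ ({a, b} : Finset S), θB x a') ≤ ∑ a' : S, θB x a' :=
        Finset.sum_le_sum_of_subset_of_nonneg hsub fun i _ _ => hB0 x i
      rw [Finset.sum_pair hab, h1, h2, hB1 x] at hle2
      linarith
    choose f hf using hex
    have hAzero : ∀ x a, a ≠ f x → θA x a = 0 := by
      intro x a ha
      by_contra h
      exact huniq x a (f x) ha h (hf x)
    have hAone : ∀ x, θA x (f x) = 1 := by
      intro x
      have := hA1 x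
      rwa [Finset.sum_eq_single (f x) (fun b _ hb => hAzero x b hb)
        (fun h => absurd (mem_univ _) h)] at this
    have hBone : ∀ x, θB x (f x) = 1 := fun x => hB1of x (f x) (hf x)
    have hBzero : ∀ x a, a ≠ f x → θB x a = 0 := by
      intro x a ha
      have hsub : ({a, f x} : Finset S) ⊆ univ := subset_univ _
      have hle2 : (∑ a' ∈ ({a, f x} : Finset S), θB x a') ≤ ∑ a' : S, θB x a' :=
        Finset.sum_le_sum_of_subset_of_nonneg hsub fun i _ _ => hB0 x i
      rw [Finset.sum_pair ha, hBone x, hB1 x] at hle2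
      have := hB0 x a
      linarith
    have hinj : Function.Injective f := by
      intro x y hxy
      by_contra hne
      have hc := hcoff x y hne
      have hge : θA x (f x) * θB y (f x) ≤ c x y :=
        Finset.single_le_sum (fun i _ => mul_nonneg (hA0 x i) (hB0 y i)) (mem_univ (f x))
      rw [hAone x, hxy, hBone y, hc] at hge
      linarith
    refine ⟨Equiv.ofBijective f (Finite.injective_iff_bijective.mp hinj), ?_, ?_⟩
    · intro x a
      simp only [Equiv.ofBijective_apply]
      by_cases h : a = f x
      · rw [if_pos h, h, hAone]
      · rw [if_neg h, hAzero x a h]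
    · intro x a
      simp only [Equiv.ofBijective_apply]
      by_cases h : a = f x
      · rw [if_pos h, h, hBone]
      · rw [if_neg h, hBzero x a h]
  · rintro ⟨σ, hAσ, hBσ⟩
    unfold ExpPay
    have : ∀ a x y : S, θA x a * θB y a * Delta p x y
        = (if a = σ x then (1:ℝ) else 0) * (if a = σ y then (1:ℝ) else 0) * Delta p x y := by
      intro a x y; rw [hAσ, hBσ]
    simp only [this]
    rw [Finset.sum_comm]
    refine Finset.sum_congr rfl fun x _ => ?_
    rw [Finset.sum_comm]
    have hinner : ∀ y : S, (∑ a : S, (if a = σ x then (1:ℝ) else 0) *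
        (if a = σ y then (1:ℝ) else 0) * Delta p x y)
        = (if x = y then Delta p x x else 0) := by
      intro y
      by_cases h : x = y
      · subst h
        simp [Finset.sum_ite_eq']
      · have hσ : σ x ≠ σ y := fun hh => h (σ.injective hh)
        rw [if_neg h]
        refine Finset.sum_eq_zero fun a _ => ?_
        by_cases h1 : a = σ x
        · rw [if_pos h1, if_neg (h1 ▸ hσ)]
          ring
        · rw [if_neg h1]
          ring
    simp only [hinner]
    simp
end

section
/- Let N ≥ 2 and let (ρ_A^i, ρ_B^i), i = 1,…,N, be independent identically distributed pairs of random probability vectors on Σ (forecast pairs), and let (ρ_A, ρ_B) denote one such pair and ρ̃_B an independent copy of ρ_B that is also independent of ρ_A. Then the expected Pearson-PP payment satisfies E[MIG^Pearson(ρ_A^·, ρ_B^·)] = 2·( E[Σ_y ρ_A(y)·ρ_B(y)/P(y)] − 1 ) − ( E[(Σ_y ρ_A(y)·ρ̃_B(y)/P(y))²] − 1 ); in particular MIG^Pearson is an unbiased estimator, independent of N, of this quantity. -/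
open Finset

section Aux
variable {Ω : Type} [Fintype Ω] [DecidableEq Ω] {N : ℕ} (μ : Ω → ℝ)

omit [DecidableEq Ω] in
lemma keyA (hμ1 : ∑ ω : Ω, μ ω = 1) (f : Ω → ℝ) (i : Fin N) :
    ∑ ω : Fin N → Ω, (∏ k, μ (ω k)) * f (ω i) = ∑ x : Ω, μ x * f x := by
  have : ∀ ω : Fin N → Ω, (∏ k, μ (ω k)) * f (ω i)
      = ∏ k, (μ (ω k) * (if k = i then f (ω k) else 1)) := by
    intro ω
    rw [Finset.prod_mul_distrib, Finset.prod_ite_eq' univ i (fun k => f (ω k))]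
    simp
  simp_rw [this]
  rw [← Fintype.prod_sum (fun k x => μ x * (if k = i then f x else 1))]
  have : ∀ k : Fin N, (∑ x : Ω, μ x * (if k = i then f x else 1))
      = if k = i then ∑ x : Ω, μ x * f x else 1 := by
    intro k
    split <;> simp [hμ1]
  simp_rw [this]
  rw [Finset.prod_ite_eq' univ i (fun _ => ∑ x : Ω, μ x * f x)]
  simp

lemma keyB (hμ1 : ∑ ω : Ω, μ ω = 1) (h : Ω → Ω → ℝ) {i j : Fin N} (hij : i ≠ j) :
    ∑ ω : Fin N → Ω, (∏ k, μ (ω k)) * h (ω i) (ω j)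
      = ∑ x : Ω, ∑ x' : Ω, μ x * μ x' * h x x' := by
  have step1 : ∀ ω : Fin N → Ω, (∏ k, μ (ω k)) * h (ω i) (ω j)
      = ∑ x : Ω, ∑ x' : Ω, h x x' *
        ∏ k, (μ (ω k) * (if k = i then (if ω k = x then 1 else 0) else 1)
          * (if k = j then (if ω k = x' then 1 else 0) else 1)) := by
    intro ω
    have : ∀ x x' : Ω,
        (∏ k, (μ (ω k) * (if k = i then (if ω k = x then 1 else 0) else 1)
          * (if k = j then (if ω k = x' then 1 else 0) else 1)))
        = (∏ k, μ (ω k)) * (if ω i = x then 1 else 0) * (if ω j = x' then 1 else 0) := by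
      intro x x'
      rw [Finset.prod_mul_distrib, Finset.prod_mul_distrib,
        Finset.prod_ite_eq' univ i (fun k => if ω k = x then (1:ℝ) else 0),
        Finset.prod_ite_eq' univ j (fun k => if ω k = x' then (1:ℝ) else 0)]
      simp
    simp_rw [this]
    rw [Finset.sum_comm]
    simp [Finset.sum_ite_eq', mul_comm]
  simp_rw [step1]
  rw [Finset.sum_comm]
  congr 1; ext x
  rw [Finset.sum_comm]
  congr 1; ext x'
  rw [← Finset.mul_sum,
    ← Fintype.prod_sum (fun k z => μ z * (if k = i then (if z = x then (1:ℝ) else 0) else 1)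
      * (if k = j then (if z = x' then 1 else 0) else 1))]
  have : ∀ k : Fin N, (∑ z : Ω, μ z * (if k = i then (if z = x then (1:ℝ) else 0) else 1)
      * (if k = j then (if z = x' then 1 else 0) else 1))
      = (if k = i then μ x else 1) * (if k = j then μ x' else 1) := by
    intro k
    rcases eq_or_ne k i with rfl | hki
    · simp [hij, Finset.sum_ite_eq', mul_ite]
    · rcases eq_or_ne k j with rfl | hkj
      · simp [hki, Finset.sum_ite_eq', mul_ite]
      · simp [hki, hkj, hμ1]
  simp_rw [this]
  rw [Finset.prod_mul_distrib, Finset.prod_ite_eq' univ i (fun _ => μ x),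
    Finset.prod_ite_eq' univ j (fun _ => μ x')]
  simp; ring
end Aux

/-- The Pearson-PP payment for `N` tasks, prior `P`, and forecast reports `rA`, `rB`. -/
noncomputable def MIGpearson {S : Type} [Fintype S] (P : S → ℝ) (N : ℕ)
    (rA rB : Fin N → S → ℝ) : ℝ :=
  (N : ℝ)⁻¹ * ∑ i, 2 * ((∑ y : S, rA i y * rB i y / P y) - 1)
    - ((N : ℝ) * ((N : ℝ) - 1))⁻¹ *
      ∑ i, ∑ j, (if i ≠ j then (∑ y : S, rA i y * rB j y / P y) ^ 2 - 1 else 0)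

/-- For `N ≥ 2` i.i.d. forecast pairs `(ρ_A^i, ρ_B^i)` (modeled by a finite sample space
`Ω` with pmf `μ` and forecast maps `a`, `b`), the expected Pearson-PP payment equals
`2·(E[∑_y ρ_A(y)ρ_B(y)/P(y)] − 1) − (E[(∑_y ρ_A(y)ρ̃_B(y)/P(y))²] − 1)`, where `ρ̃_B` is
an independent copy of `ρ_B`; in particular it is an unbiased estimator independent of `N`. -/
theorem stmt_8 (S Ω : Type) [Fintype S] [Nonempty S] [DecidableEq S]
    [Fintype Ω] [Nonempty Ω]
    (P : S → ℝ) (hP0 : ∀ y, 0 < P y) (hP1 : ∑ y : S, P y = 1)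
    (μ : Ω → ℝ) (hμ0 : ∀ ω, 0 ≤ μ ω) (hμ1 : ∑ ω : Ω, μ ω = 1)
    (a b : Ω → S → ℝ)
    (ha0 : ∀ ω y, 0 ≤ a ω y) (ha1 : ∀ ω, ∑ y : S, a ω y = 1)
    (hb0 : ∀ ω y, 0 ≤ b ω y) (hb1 : ∀ ω, ∑ y : S, b ω y = 1)
    (N : ℕ) (hN : 2 ≤ N) :
    ∑ ω : Fin N → Ω, (∏ i, μ (ω i)) *
        MIGpearson P N (fun i => a (ω i)) (fun i => b (ω i))
      = 2 * ((∑ ω : Ω, μ ω * ∑ y : S, a ω y * b ω y / P y) - 1)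
        - ((∑ ω : Ω, ∑ ω' : Ω, μ ω * μ ω' * (∑ y : S, a ω y * b ω' y / P y) ^ 2) - 1) := by
  classical
  set E1 : ℝ := ∑ ω : Ω, μ ω * ∑ y : S, a ω y * b ω y / P y with hE1def
  set E2 : ℝ := ∑ ω : Ω, ∑ ω' : Ω, μ ω * μ ω' * (∑ y : S, a ω y * b ω' y / P y) ^ 2 with hE2def
  have hμμ : ∑ x : Ω, ∑ x' : Ω, μ x * μ x' = 1 := by
    simp [← Finset.mul_sum, hμ1, ← Finset.sum_mul]
  -- first moment term
  have hA : ∀ i : Fin N,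
      ∑ ω : Fin N → Ω, (∏ k, μ (ω k)) *
        (2 * ((∑ y : S, a (ω i) y * b (ω i) y / P y) - 1)) = 2 * (E1 - 1) := by
    intro i
    rw [keyA μ hμ1 (fun x => 2 * ((∑ y : S, a x y * b x y / P y) - 1)) i]
    have : ∀ x : Ω, μ x * (2 * ((∑ y : S, a x y * b x y / P y) - 1))
        = 2 * (μ x * ∑ y : S, a x y * b x y / P y) - 2 * μ x := by intro x; ring
    simp_rw [this]
    rw [Finset.sum_sub_distrib, ← Finset.mul_sum, ← Finset.mul_sum, hμ1, ← hE1def]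
    ring
  -- second moment term
  have hB : ∀ i j : Fin N, i ≠ j →
      ∑ ω : Fin N → Ω, (∏ k, μ (ω k)) *
        ((∑ y : S, a (ω i) y * b (ω j) y / P y) ^ 2 - 1) = E2 - 1 := by
    intro i j hij
    rw [keyB μ hμ1 (fun x x' => (∑ y : S, a x y * b x' y / P y) ^ 2 - 1) hij]
    have : ∀ x x' : Ω, μ x * μ x' * ((∑ y : S, a x y * b x' y / P y) ^ 2 - 1)
        = μ x * μ x' * (∑ y : S, a x y * b x' y / P y) ^ 2 - μ x * μ x' := by
      intro x x'; ring
    simp_rw [this, Finset.sum_sub_distrib, ← hE2def, hμμ]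
  -- expand the payment and push the ω-sum inside
  have expand : ∑ ω : Fin N → Ω, (∏ i, μ (ω i)) *
        MIGpearson P N (fun i => a (ω i)) (fun i => b (ω i))
      = (N : ℝ)⁻¹ * ∑ i : Fin N,
          (∑ ω : Fin N → Ω, (∏ k, μ (ω k)) *
            (2 * ((∑ y : S, a (ω i) y * b (ω i) y / P y) - 1)))
        - ((N : ℝ) * ((N : ℝ) - 1))⁻¹ * ∑ i : Fin N, ∑ j : Fin N,
            (if i ≠ j then
              ∑ ω : Fin N → Ω, (∏ k, μ (ω k)) *
                ((∑ y : S, a (ω i) y * b (ω j) y / P y) ^ 2 - 1)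
            else 0) := by
    simp only [MIGpearson]
    have pt : ∀ ω : Fin N → Ω, (∏ i, μ (ω i)) *
        ((N:ℝ)⁻¹ * ∑ i, 2 * ((∑ y : S, a (ω i) y * b (ω i) y / P y) - 1)
          - ((N:ℝ)*((N:ℝ)-1))⁻¹ * ∑ i, ∑ j,
            (if i ≠ j then (∑ y : S, a (ω i) y * b (ω j) y / P y)^2 - 1 else 0))
      = (N:ℝ)⁻¹ * ∑ i, (∏ k, μ (ω k)) *
            (2 * ((∑ y : S, a (ω i) y * b (ω i) y / P y) - 1))
        - ((N:ℝ)*((N:ℝ)-1))⁻¹ * ∑ i, ∑ j,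
            (if i ≠ j then (∏ k, μ (ω k)) *
              ((∑ y : S, a (ω i) y * b (ω j) y / P y)^2 - 1) else 0) := by
      intro ω
      rw [mul_sub, mul_left_comm, mul_left_comm (∏ i, μ (ω i))]
      congr 2
      · rw [Finset.mul_sum]
      · rw [Finset.mul_sum]
        refine Finset.sum_congr rfl fun i _ => ?_
        rw [Finset.mul_sum]
        refine Finset.sum_congr rfl fun j _ => ?_
        rw [mul_ite, mul_zero]
    simp_rw [pt]
    rw [Finset.sum_sub_distrib, ← Finset.mul_sum, ← Finset.mul_sum]
    congr 1
    · congr 1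
      rw [Finset.sum_comm]
    · congr 1
      rw [Finset.sum_comm]
      refine Finset.sum_congr rfl fun i _ => ?_
      rw [Finset.sum_comm]
      refine Finset.sum_congr rfl fun j _ => ?_
      by_cases hij : i ≠ j <;> simp [hij]
  rw [expand]
  simp_rw [hA]
  have hBsum : ∑ i : Fin N, ∑ j : Fin N,
      (if i ≠ j then
        ∑ ω : Fin N → Ω, (∏ k, μ (ω k)) *
          ((∑ y : S, a (ω i) y * b (ω j) y / P y) ^ 2 - 1)
      else 0) = (N : ℝ) * ((N : ℝ) - 1) * (E2 - 1) := by
    have : ∀ i j : Fin N, (if i ≠ j then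
        ∑ ω : Fin N → Ω, (∏ k, μ (ω k)) *
          ((∑ y : S, a (ω i) y * b (ω j) y / P y) ^ 2 - 1)
      else 0) = (E2 - 1) - (if j = i then E2 - 1 else 0) := by
      intro i j
      by_cases hij : i = j
      · simp [hij]
      · rw [if_pos (Ne.symm (fun h => hij h.symm)), hB i j hij, if_neg (fun h => hij h.symm)]
        ring
    simp_rw [this, Finset.sum_sub_distrib, Finset.sum_ite_eq' univ _ (fun _ => E2 - 1)]
    simp [Finset.card_univ, mul_sub]
    ring
  rw [hBsum]
  rw [Finset.sum_const, Finset.card_univ, Fintype.card_fin, nsmul_eq_mul]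
  have hN0 : (N : ℝ) ≠ 0 := by positivity
  have hN1 : (N : ℝ) - 1 ≠ 0 := by
    have : (2 : ℝ) ≤ (N : ℝ) := by exact_mod_cast hN
    intro h; nlinarith
  field_simp
end

section
/- Let σ : Σ → Σ be a bijection that preserves the prior, i.e. P(σ(y)) = P(y) for all y. For forecast reports r_A, r_B define the permuted reports by (σ·r)(i)(y) := r(i)(σ⁻¹(y)). Then MIG^Pearson(σ·r_A, σ·r_B) = MIG^Pearson(r_A, r_B); i.e., the Pearson-PP payment is invariant under a shared prior-preserving permutation strategy. -/
open Finset

/-- The Pearson-PP payment is invariant under a shared prior-preserving permutation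
strategy `(σ·r)(i)(y) = r(i)(σ⁻¹ y)`. -/
theorem stmt_10 (S : Type) [Fintype S] [Nonempty S] [DecidableEq S]
    (P : S → ℝ) (hP0 : ∀ y, 0 < P y) (hP1 : ∑ y : S, P y = 1)
    (σ : S ≃ S) (hσ : ∀ y, P (σ y) = P y)
    (N : ℕ) (hN : 2 ≤ N) (rA rB : Fin N → S → ℝ)
    (hA0 : ∀ i y, 0 ≤ rA i y) (hA1 : ∀ i, ∑ y : S, rA i y = 1)
    (hB0 : ∀ i y, 0 ≤ rB i y) (hB1 : ∀ i, ∑ y : S, rB i y = 1) :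
    MIGpearson P N (fun i y => rA i (σ.symm y)) (fun i y => rB i (σ.symm y))
      = MIGpearson P N rA rB := by
  have key : ∀ i j : Fin N,
      (∑ y : S, rA i (σ.symm y) * rB j (σ.symm y) / P y)
        = ∑ y : S, rA i y * rB j y / P y := by
    intro i j
    rw [← Equiv.sum_comp σ (fun y => rA i (σ.symm y) * rB j (σ.symm y) / P y)]
    simp [hσ]
  unfold MIGpearson
  simp only [key]
end

section
/- Consider m ≥ 2 sellers with signal set Σ and, for each ordered pair i ≠ j, a joint probability mass function p_{ij} on Σ × Σ with marginals p_i, p_j and correlation matrix Δ_{ij}(x,y) := p_{ij}(x,y) − p_i(x)·p_j(y). Suppose each Δ_{ij} satisfies the categorical sign condition: Δ_{ij}(x,x) ≥ 0 for all x and Δ_{ij}(x,y) ≤ 0 for all x ≠ y. Then for any row-stochastic strategy matrices θ_1, …, θ_m and any α > 0, β ∈ ℝ, each seller i's multi-seller expected payment satisfies α·Σ_{j ≠ i} ExpPay_{ij}(θ_i, θ_j) + β ≤ α·Σ_{j ≠ i} Σ_{x∈Σ} Δ_{ij}(x,x) + β, with equality when all sellers use the identity (truthful) strategy; i.e., truth-telling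 maximizes each seller's expected payment PayFunc(r_i; r_{−i}) = α·Σ_{j≠i} MIG(r_i, r_j) + β in the multi-seller extension of SMind. -/
open Finset

/-!
Under the sign condition only the diagonal of `Δ` can contribute positively, and the weight
`∑ₐ θA(x,a) θB(x,a)` it receives is at most `1` for row-stochastic strategies; the identity
strategy attains this weight exactly. Each pairwise payment is therefore maximised separately,
and the seller's payment is a positive affine function of their sum.
-/

section

variable {S : Type} [Fintype S]

lemma sum_mul_le_one_of_stochastic {u v : S → ℝ} (hu0 : ∀ a, 0 ≤ u a) (hv0 : ∀ a, 0 ≤ v a)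
    (hu1 : ∑ a, u a = 1) (hv1 : ∑ a, v a = 1) :
    ∑ a, u a * v a ≤ 1 := by
  have hv_le_one : ∀ a, v a ≤ 1 := fun a =>
    hv1 ▸ single_le_sum (fun b _ => hv0 b) (mem_univ a)
  calc ∑ a, u a * v a ≤ ∑ a, u a * 1 :=
        sum_le_sum fun a _ => mul_le_mul_of_nonneg_left (hv_le_one a) (hu0 a)
    _ = 1 := by simp [hu1]

lemma sum_mul_le_diag [DecidableEq S] {D : S → S → ℝ} (hoff : ∀ x y, x ≠ y → D x y ≤ 0)
    {c : S → ℝ} (hc : ∀ y, 0 ≤ c y) (x : S) :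
    ∑ y, c y * D x y ≤ c x * D x x := by
  rw [← add_sum_erase _ _ (mem_univ x)]
  refine add_le_of_nonpos_right (sum_nonpos fun y hy => ?_)
  exact mul_nonpos_of_nonneg_of_nonpos (hc y) (hoff x y (ne_of_mem_erase hy).symm)

lemma sum_strategy_mul_le_trace [DecidableEq S] {D : S → S → ℝ} (hdiag : ∀ x, 0 ≤ D x x)
    (hoff : ∀ x y, x ≠ y → D x y ≤ 0) {θA θB : S → S → ℝ}
    (hA0 : ∀ x a, 0 ≤ θA x a) (hB0 : ∀ x a, 0 ≤ θB x a)
    (hA1 : ∀ x, ∑ a, θA x a = 1) (hB1 : ∀ x, ∑ a, θB x a = 1) :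
    ∑ a, ∑ x, ∑ y, θA x a * θB y a * D x y ≤ ∑ x, D x x := by
  calc ∑ a, ∑ x, ∑ y, θA x a * θB y a * D x y
      = ∑ a, ∑ x, θA x a * ∑ y, θB y a * D x y := by simp only [mul_assoc, mul_sum]
    _ ≤ ∑ a, ∑ x, θA x a * (θB x a * D x x) :=
        sum_le_sum fun a _ => sum_le_sum fun x _ =>
          mul_le_mul_of_nonneg_left (sum_mul_le_diag hoff (fun y => hB0 y a) x) (hA0 x a)
    _ = ∑ x, (∑ a, θA x a * θB x a) * D x x := by
        rw [sum_comm]; simp only [sum_mul, mul_assoc]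
    _ ≤ ∑ x, D x x :=
        sum_le_sum fun x _ => mul_le_of_le_one_left (hdiag x)
          (sum_mul_le_one_of_stochastic (hA0 x) (hB0 x) (hA1 x) (hB1 x))

lemma expPay_le_sum_delta_diag [DecidableEq S] {p : S → S → ℝ}
    (hdiag : ∀ x, 0 ≤ Delta p x x) (hoff : ∀ x y, x ≠ y → Delta p x y ≤ 0)
    {θA θB : S → S → ℝ} (hA0 : ∀ x a, 0 ≤ θA x a) (hB0 : ∀ x a, 0 ≤ θB x a)
    (hA1 : ∀ x, ∑ a, θA x a = 1) (hB1 : ∀ x, ∑ a, θB x a = 1) :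
    ExpPay p θA θB ≤ ∑ x, Delta p x x :=
  sum_strategy_mul_le_trace hdiag hoff hA0 hB0 hA1 hB1

lemma expPay_truthful [DecidableEq S] (p : S → S → ℝ) :
    ExpPay p (fun x a => if a = x then (1 : ℝ) else 0)
      (fun x a => if a = x then (1 : ℝ) else 0) = ∑ x, Delta p x x := by
  simp [ExpPay, ite_mul]

end

theorem stmt_13_general (S : Type) [Fintype S] [DecidableEq S]
    (m : ℕ)
    (p : Fin m → Fin m → S → S → ℝ)
    (hdiag : ∀ i j, i ≠ j → ∀ x : S, 0 ≤ Delta (p i j) x x)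
    (hoff : ∀ i j, i ≠ j → ∀ x y : S, x ≠ y → Delta (p i j) x y ≤ 0)
    (θ : Fin m → S → S → ℝ)
    (hθ0 : ∀ i x a, 0 ≤ θ i x a) (hθ1 : ∀ i x, ∑ a : S, θ i x a = 1)
    (α β : ℝ) (hα : 0 < α) :
    (∀ i : Fin m,
        α * (∑ j ∈ Finset.univ.filter (fun j => j ≠ i), ExpPay (p i j) (θ i) (θ j)) + β
          ≤ α * (∑ j ∈ Finset.univ.filter (fun j => j ≠ i),
                ∑ x : S, Delta (p i j) x x) + β) ∧
    (∀ i : Fin m,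
        α * (∑ j ∈ Finset.univ.filter (fun j => j ≠ i),
              ExpPay (p i j) (fun x a => if a = x then (1 : ℝ) else 0)
                (fun x a => if a = x then (1 : ℝ) else 0)) + β
          = α * (∑ j ∈ Finset.univ.filter (fun j => j ≠ i),
                ∑ x : S, Delta (p i j) x x) + β) := by
  refine ⟨fun i => ?_, fun i => ?_⟩
  · gcongr with j hj
    have hij : i ≠ j := (mem_filter.mp hj).2.symm
    exact expPay_le_sum_delta_diag (hdiag i j hij) (hoff i j hij)
      (hθ0 i) (hθ0 j) (hθ1 i) (hθ1 j)
  · simp only [expPay_truthful]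

/-- Multi-seller extension of SMind: with `m ≥ 2` sellers, pairwise joint pmfs whose
correlation matrices satisfy the categorical sign condition, and payment
`α·∑_{j≠i} MIG(r_i, r_j) + β`, every strategy profile gives each seller expected payment
at most the truth-telling payment, with equality when all sellers use the identity
(truthful) strategy. -/
theorem stmt_13 (S : Type) [Fintype S] [Nonempty S] [DecidableEq S]
    (m : ℕ) (hm : 2 ≤ m)
    (p : Fin m → Fin m → S → S → ℝ)
    (hp0 : ∀ i j, i ≠ j → ∀ x y, 0 ≤ p i j x y)
    (hp1 : ∀ i j, i ≠ j → ∑ x : S, ∑ y : S, p i j x y = 1)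
    (hdiag : ∀ i j, i ≠ j → ∀ x : S, 0 ≤ Delta (p i j) x x)
    (hoff : ∀ i j, i ≠ j → ∀ x y : S, x ≠ y → Delta (p i j) x y ≤ 0)
    (θ : Fin m → S → S → ℝ)
    (hθ0 : ∀ i x a, 0 ≤ θ i x a) (hθ1 : ∀ i x, ∑ a : S, θ i x a = 1)
    (α β : ℝ) (hα : 0 < α) :
    (∀ i : Fin m,
        α * (∑ j ∈ Finset.univ.filter (fun j => j ≠ i), ExpPay (p i j) (θ i) (θ j)) + β
          ≤ α * (∑ j ∈ Finset.univ.filter (fun j => j ≠ i),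
                ∑ x : S, Delta (p i j) x x) + β) ∧
    (∀ i : Fin m,
        α * (∑ j ∈ Finset.univ.filter (fun j => j ≠ i),
              ExpPay (p i j) (fun x a => if a = x then (1 : ℝ) else 0)
                (fun x a => if a = x then (1 : ℝ) else 0)) + β
          = α * (∑ j ∈ Finset.univ.filter (fun j => j ≠ i),
                ∑ x : S, Delta (p i j) x x) + β) :=
  stmt_13_general S m p hdiag hoff θ hθ0 hθ1 α β hα
end
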